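/- Fix a matrix D̄ ∈ ℝ^{N×n}, an integer τ ≥ 1, and a real α > 0 with ταL ≤ 2. Let Y : ℕ → ℝ^{N×n} satisfy Y(s+1) = Y(s) − α∇F(Y(s)) − αD̄ for all s ≥ 0. Then for every integer s with 0 ≤ s ≤ τ−1: ‖∇F(Y(s)) − ∇F(Y(0))‖ ≤ (αLτ/2)(1 + 2/τ)^{τ−1}·(L‖Y(0) − X*‖ + ‖D̄ − D*‖). -/

import Mathlib

/-! With `e s = ‖Y s - Y 0‖`, the splitting
`Y (s+1) - Y 0 = (Y s - Y 0) - α (∇F(Y s) - ∇F(Y 0)) - α (∇F(Y 0) + D̄)` and the fact that `∇F` is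
`L`-Lipschitz for the Frobenius norm give `e (s+1) ≤ (1 + αL) e s + α ‖∇F(Y 0) + D̄‖`. So `e s` is
bounded by a geometric sum of ratio `1 + αL ≤ 1 + 2/τ`, which for `s ≤ τ - 1` is at most
`(τ/2)(1 + 2/τ)^(τ-1)`; one more Lipschitz step bounds the drift of the gradient, and
`∇F(Y 0) + D̄ = (∇F(Y 0) - ∇F(X*)) + (D̄ - D*)` since `D* = -∇F(X*)`. -/

open Matrix
set_option linter.unusedVariables false

noncomputable def Jmat (N : ℕ) : Matrix (Fin N) (Fin N) ℝ :=
  Matrix.of fun _ _ => (N : ℝ)⁻¹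

noncomputable def gradF {N n : ℕ}
    (g : Fin N → EuclideanSpace ℝ (Fin n) → EuclideanSpace ℝ (Fin n))
    (X : Matrix (Fin N) (Fin n) ℝ) : Matrix (Fin N) (Fin n) ℝ :=
  Matrix.of fun i => (WithLp.equiv 2 (Fin n → ℝ))
    (g i ((WithLp.equiv 2 (Fin n → ℝ)).symm (X i)))

/-- Squared weighted norm `‖A‖_Q² = tr(AᵀQA)`. -/
noncomputable def nsqQ {N n : ℕ} (Q : Matrix (Fin N) (Fin N) ℝ)
    (A : Matrix (Fin N) (Fin n) ℝ) : ℝ :=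
  Matrix.trace (Aᵀ * Q * A)

/-- Squared Frobenius norm `‖A‖² = tr(AᵀA)`. -/
noncomputable def frobSq {N n : ℕ} (A : Matrix (Fin N) (Fin n) ℝ) : ℝ :=
  Matrix.trace (Aᵀ * A)

/-- Frobenius norm `‖A‖ = √tr(AᵀA)`. -/
noncomputable def fnorm {N n : ℕ} (A : Matrix (Fin N) (Fin n) ℝ) : ℝ :=
  Real.sqrt (Matrix.trace (Aᵀ * A))

open scoped Matrix.Norms.Frobenius

theorem Matrix.frobenius_norm_sq_eq_sum_rows {m n α : Type*} [Fintype m] [Fintype n]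
    [SeminormedAddCommGroup α] (A : Matrix m n α) :
    ‖A‖ ^ 2 = ∑ i, ‖WithLp.toLp 2 (A i)‖ ^ 2 :=
  PiLp.norm_sq_eq_of_L2 _ (WithLp.toLp 2 fun i => WithLp.toLp 2 (A i))

theorem fnorm_eq_norm {N n : ℕ} (A : Matrix (Fin N) (Fin n) ℝ) : fnorm A = ‖A‖ := by
  rw [fnorm, ← Real.sqrt_sq (norm_nonneg A), Matrix.frobenius_norm_sq_eq_sum_rows]
  congr 1
  simp only [PiLp.norm_sq_eq_of_L2, Real.norm_eq_abs, sq_abs]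
  simp only [Matrix.trace, Matrix.diag_apply, Matrix.mul_apply, Matrix.transpose_apply, sq]
  exact Finset.sum_comm

theorem Matrix.frobenius_norm_le_mul_of_rows {m n α β : Type*} [Fintype m] [Fintype n]
    [SeminormedAddCommGroup α] [SeminormedAddCommGroup β] {A : Matrix m n α} {B : Matrix m n β}
    {c : ℝ} (hc : 0 ≤ c)
    (h : ∀ i, ‖WithLp.toLp 2 (A i)‖ ≤ c * ‖WithLp.toLp 2 (B i)‖) : ‖A‖ ≤ c * ‖B‖ := by
  refine le_of_pow_le_pow_left₀ two_ne_zero (by positivity) ?_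
  rw [mul_pow, frobenius_norm_sq_eq_sum_rows, frobenius_norm_sq_eq_sum_rows, Finset.mul_sum]
  gcongr with i
  simpa [mul_pow] using pow_le_pow_left₀ (norm_nonneg _) (h i) 2

theorem norm_gradF_sub_le {N n : ℕ} {L : ℝ} (hL : 0 ≤ L)
    {g : Fin N → EuclideanSpace ℝ (Fin n) → EuclideanSpace ℝ (Fin n)}
    (hg : ∀ i x y, ‖g i x - g i y‖ ≤ L * ‖x - y‖) (X Y : Matrix (Fin N) (Fin n) ℝ) :
    ‖gradF g X - gradF g Y‖ ≤ L * ‖X - Y‖ :=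
  Matrix.frobenius_norm_le_mul_of_rows hL fun i => hg i _ _

theorem le_mul_geom_sum_of_le_mul_add {e : ℕ → ℝ} {q b : ℝ} (hq : 0 ≤ q) (he₀ : e 0 = 0)
    (he : ∀ s, e (s + 1) ≤ q * e s + b) (s : ℕ) : e s ≤ b * ∑ k ∈ Finset.range s, q ^ k := by
  induction s with
  | zero => simp [he₀]
  | succ s ih =>
    calc e (s + 1) ≤ q * (b * ∑ k ∈ Finset.range s, q ^ k) + b :=
          (he s).trans (by gcongr)
      _ = b * ∑ k ∈ Finset.range (s + 1), q ^ k := by rw [geom_sum_succ]; ring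

theorem geom_sum_one_add_le {c τ : ℝ} (hc : 0 ≤ c) (hτ : 0 < τ) (hcτ : τ * c ≤ 2) {s m : ℕ}
    (hs : s ≤ m) : ∑ k ∈ Finset.range s, (1 + c) ^ k ≤ τ / 2 * (1 + 2 / τ) ^ m := by
  have hc' : c ≤ 2 / τ := by rw [le_div_iff₀ hτ]; linarith
  have hr : 1 ≤ 1 + 2 / τ := by simp only [le_add_iff_nonneg_right]; positivity
  calc ∑ k ∈ Finset.range s, (1 + c) ^ k ≤ ∑ k ∈ Finset.range s, (1 + 2 / τ) ^ k := by gcongr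
    _ = τ / 2 * ((1 + 2 / τ) ^ s - 1) := by
        rw [geom_sum_eq (by simp [hτ.ne'])]
        field_simp
        ring
    _ ≤ τ / 2 * (1 + 2 / τ) ^ m := by
        gcongr
        exact (sub_le_self _ zero_le_one).trans (pow_le_pow_right₀ hr hs)

section DriftedGradientIteration

variable {E : Type*} [NormedAddCommGroup E] [NormedSpace ℝ E] {G : E → E} {Y : ℕ → E} {D : E}
  {α L : ℝ}

theorem norm_succ_sub_zero_le (hα : 0 ≤ α) (hG : ∀ x y, ‖G x - G y‖ ≤ L * ‖x - y‖)
    (hY : ∀ s, Y (s + 1) = Y s - α • G (Y s) - α • D) (s : ℕ) :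
    ‖Y (s + 1) - Y 0‖ ≤ (1 + α * L) * ‖Y s - Y 0‖ + α * ‖G (Y 0) + D‖ := by
  have hsplit : Y (s + 1) - Y 0 = (Y s - Y 0) - α • (G (Y s) - G (Y 0)) - α • (G (Y 0) + D) := by
    rw [hY s]
    module
  calc ‖Y (s + 1) - Y 0‖
      ≤ ‖Y s - Y 0‖ + α * ‖G (Y s) - G (Y 0)‖ + α * ‖G (Y 0) + D‖ := by
        rw [hsplit, ← norm_smul_of_nonneg hα, ← norm_smul_of_nonneg hα]
        exact (norm_sub_le _ _).trans (by gcongr; exact norm_sub_le _ _)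
    _ ≤ ‖Y s - Y 0‖ + α * (L * ‖Y s - Y 0‖) + α * ‖G (Y 0) + D‖ := by gcongr; exact hG _ _
    _ = (1 + α * L) * ‖Y s - Y 0‖ + α * ‖G (Y 0) + D‖ := by ring

theorem norm_sub_zero_le_geom_sum (hα : 0 ≤ α) (hL : 0 ≤ L)
    (hG : ∀ x y, ‖G x - G y‖ ≤ L * ‖x - y‖) (hY : ∀ s, Y (s + 1) = Y s - α • G (Y s) - α • D)
    (s : ℕ) :
    ‖Y s - Y 0‖ ≤ α * ‖G (Y 0) + D‖ * ∑ k ∈ Finset.range s, (1 + α * L) ^ k :=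
  le_mul_geom_sum_of_le_mul_add (e := fun s => ‖Y s - Y 0‖) (by positivity) (by simp)
    (norm_succ_sub_zero_le hα hG hY) s

theorem norm_apply_sub_apply_zero_le (hα : 0 ≤ α) (hL : 0 ≤ L)
    (hG : ∀ x y, ‖G x - G y‖ ≤ L * ‖x - y‖) (hY : ∀ s, Y (s + 1) = Y s - α • G (Y s) - α • D)
    {τ : ℝ} (hτ : 0 < τ) (hταL : τ * α * L ≤ 2) {s m : ℕ} (hs : s ≤ m) :
    ‖G (Y s) - G (Y 0)‖ ≤ α * L * τ / 2 * (1 + 2 / τ) ^ m * ‖G (Y 0) + D‖ :=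
  calc ‖G (Y s) - G (Y 0)‖ ≤ L * ‖Y s - Y 0‖ := hG _ _
    _ ≤ L * (α * ‖G (Y 0) + D‖ * (τ / 2 * (1 + 2 / τ) ^ m)) := by
        gcongr
        refine (norm_sub_zero_le_geom_sum hα hL hG hY s).trans ?_
        gcongr
        exact geom_sum_one_add_le (by positivity) hτ (by linarith) hs
    _ = α * L * τ / 2 * (1 + 2 / τ) ^ m * ‖G (Y 0) + D‖ := by ring

end DriftedGradientIteration

theorem within_round_gradient_drift_bound_general
    {N n : ℕ}
    (L μ : ℝ) (hμ : 0 < μ) (hLμ : μ ≤ L)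
    (g : Fin N → EuclideanSpace ℝ (Fin n) → EuclideanSpace ℝ (Fin n))
    (hsmooth : ∀ i x y, ‖g i x - g i y‖ ≤ L * ‖x - y‖)
    (Xstar : Matrix (Fin N) (Fin n) ℝ)
    (Dstar : Matrix (Fin N) (Fin n) ℝ) (hDstar : Dstar = - gradF g Xstar)
    (Dbar : Matrix (Fin N) (Fin n) ℝ)
    (τ : ℕ) (hτ : 1 ≤ τ) (α : ℝ) (hα : 0 < α)
    (hταL : (τ : ℝ) * α * L ≤ 2)
    (Y : ℕ → Matrix (Fin N) (Fin n) ℝ)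
    (hY : ∀ s : ℕ, Y (s + 1) = Y s - α • gradF g (Y s) - α • Dbar) :
    ∀ s : ℕ, s ≤ τ - 1 →
      fnorm (gradF g (Y s) - gradF g (Y 0))
      ≤ (α * L * (τ : ℝ) / 2) * (1 + 2 / (τ : ℝ)) ^ (τ - 1)
          * (L * fnorm (Y 0 - Xstar) + fnorm (Dbar - Dstar)) := by
  intro s hs
  have hL : 0 ≤ L := hμ.le.trans hLμ
  have hG := norm_gradF_sub_le hL hsmooth
  have hinit : ‖gradF g (Y 0) + Dbar‖ ≤ L * ‖Y 0 - Xstar‖ + ‖Dbar - Dstar‖ := by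
    rw [show gradF g (Y 0) + Dbar = (gradF g (Y 0) - gradF g Xstar) + (Dbar - Dstar) by
      rw [hDstar]; abel]
    exact (norm_add_le _ _).trans (by gcongr; exact hG _ _)
  simp only [fnorm_eq_norm]
  calc ‖gradF g (Y s) - gradF g (Y 0)‖
      ≤ α * L * τ / 2 * (1 + 2 / (τ : ℝ)) ^ (τ - 1) * ‖gradF g (Y 0) + Dbar‖ :=
        norm_apply_sub_apply_zero_le hα.le hL hG hY (Nat.cast_pos.mpr hτ) hταL hs
    _ ≤ _ := by gcongr

/-- gradient-drift bound for the within-round iteration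
`Y(s+1) = Y(s) − α∇F(Y(s)) − αD̄`, for `0 ≤ s ≤ τ − 1`. -/
theorem within_round_gradient_drift_bound
    {N n : ℕ} (hN : 1 ≤ N) (hn : 1 ≤ n)
    (L μ : ℝ) (hμ : 0 < μ) (hLμ : μ ≤ L)
    (f : Fin N → EuclideanSpace ℝ (Fin n) → ℝ)
    (g : Fin N → EuclideanSpace ℝ (Fin n) → EuclideanSpace ℝ (Fin n))
    (hdiff : ∀ i, Differentiable ℝ (f i))
    (hgrad : ∀ i x, HasGradientAt (f i) (g i x) x)
    (hsmooth : ∀ i x y, ‖g i x - g i y‖ ≤ L * ‖x - y‖)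
    (hsc : ∀ i x y, μ * ‖x - y‖ ^ 2 ≤ (inner ℝ (g i x - g i y) (x - y) : ℝ))
    (xstar : EuclideanSpace ℝ (Fin n))
    (hxstar : ∀ y : EuclideanSpace ℝ (Fin n),
      (N : ℝ)⁻¹ * ∑ i : Fin N, f i xstar ≤ (N : ℝ)⁻¹ * ∑ i : Fin N, f i y)
    (Xstar : Matrix (Fin N) (Fin n) ℝ)
    (hXstar : ∀ i : Fin N, Xstar i = (WithLp.equiv 2 (Fin n → ℝ)) xstar)
    (Dstar : Matrix (Fin N) (Fin n) ℝ) (hDstar : Dstar = - gradF g Xstar)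
    (Dbar : Matrix (Fin N) (Fin n) ℝ)
    (τ : ℕ) (hτ : 1 ≤ τ) (α : ℝ) (hα : 0 < α)
    (hταL : (τ : ℝ) * α * L ≤ 2)
    (Y : ℕ → Matrix (Fin N) (Fin n) ℝ)
    (hY : ∀ s : ℕ, Y (s + 1) = Y s - α • gradF g (Y s) - α • Dbar) :
    ∀ s : ℕ, s ≤ τ - 1 →
      fnorm (gradF g (Y s) - gradF g (Y 0))
      ≤ (α * L * (τ : ℝ) / 2) * (1 + 2 / (τ : ℝ)) ^ (τ - 1)
          * (L * fnorm (Y 0 - Xstar) + fnorm (Dbar - Dstar)) :=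
  within_round_gradient_drift_bound_general L μ hμ hLμ g hsmooth Xstar Dstar hDstar Dbar τ hτ α hα
    hταL Y hY
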